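/- Let S₀, S ⊂ {1,…,n} be finite sets, p_n = |S₀|, and let r_n > 0 satisfy r_n² ≥ p_n. Then (v_{|S∩S₀|}/v_{|S₀|}) · r_n^{−|S₀∖S|} ≤ exp(C·|S₀|) for a universal constant C > 0, where v_k is the volume of the k-dimensional unit Euclidean ball (v_0 = 1). -/

import Mathlib

/-!
With `a = |S ∩ S₀|`, `b = |S₀ \ S|` and `p = a + b = |S₀|`, the ratio of ball volumes is
`π^{-b/2} Γ(p/2 + 1) / Γ(a/2 + 1)`, and log-convexity of `Γ` bounds the Gamma quotient by
`(p/2 + 1)^{b/2}`. Since `r^{-b} ≤ p^{-b/2}`, the whole expression is at most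
`((p/2 + 1) / (π p))^{b/2} ≤ 1` (for `b ≥ 1`, hence `p ≥ 1`), so any `C > 0` works.
-/

open Finset Real

/-- The volume of the `k`-dimensional Euclidean unit ball: `π^{k/2}/Γ(k/2+1)`. -/
noncomputable def unitBallVolume (k : ℕ) : ℝ :=
  Real.pi ^ ((k : ℝ) / 2) / Real.Gamma ((k : ℝ) / 2 + 1)

/-- By log-convexity, the slope of `log ∘ Γ` on `[x, y]` is at most its slope `log y`
on `[y, y + 1]`. -/
theorem Real.Gamma_le_Gamma_mul_rpow_sub {x y : ℝ} (hx : 0 < x) (hxy : x ≤ y) :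
    Gamma y ≤ Gamma x * y ^ (y - x) := by
  rcases hxy.eq_or_lt with rfl | hxy
  · simp
  have hy : 0 < y := hx.trans hxy
  have hslope := convexOn_log_Gamma.slope_mono_adjacent (x := x) (y := y) (z := y + 1)
    hx (by simp only [Set.mem_Ioi]; linarith) hxy (lt_add_one y)
  simp only [Function.comp, Gamma_add_one hy.ne', log_mul hy.ne' (Gamma_pos_of_pos hy).ne',
    add_sub_cancel_left, add_sub_cancel_right, div_one] at hslope
  have hlog : log (Gamma y) ≤ log (Gamma x) + (y - x) * log y := by
    rw [div_le_iff₀ (sub_pos.2 hxy)] at hslope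
    linarith
  calc Gamma y = exp (log (Gamma y)) := (exp_log (Gamma_pos_of_pos hy)).symm
    _ ≤ exp (log (Gamma x) + (y - x) * log y) := exp_le_exp.2 hlog
    _ = Gamma x * y ^ (y - x) := by
      rw [exp_add, exp_log (Gamma_pos_of_pos hx), rpow_def_of_pos hy, mul_comm (y - x)]

lemma unitBallVolume_pos (k : ℕ) : 0 < unitBallVolume k :=
  div_pos (rpow_pos_of_pos pi_pos _) (Gamma_pos_of_pos (by positivity))

lemma unitBallVolume_div_le (a b : ℕ) :
    unitBallVolume a / unitBallVolume (a + b) ≤ (((a + b : ℝ) / 2 + 1) / π) ^ ((b : ℝ) / 2) := by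
  set x : ℝ := (a : ℝ) / 2 + 1
  set y : ℝ := (a + b : ℝ) / 2 + 1
  have hx : 0 < x := by positivity
  have hy : 0 < y := by positivity
  have hyx : y - x = (b : ℝ) / 2 := by ring
  have hΓ : Gamma y ≤ Gamma x * y ^ ((b : ℝ) / 2) := by
    rw [← hyx]
    exact Gamma_le_Gamma_mul_rpow_sub hx (by rw [← sub_nonneg, hyx]; positivity)
  have hπ : π ^ (((a + b : ℕ) : ℝ) / 2) = π ^ ((a : ℝ) / 2) * π ^ ((b : ℝ) / 2) := by
    rw [← rpow_add pi_pos]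
    push_cast
    ring_nf
  have hΓx := Gamma_pos_of_pos hx
  calc unitBallVolume a / unitBallVolume (a + b)
      = Gamma y / (Gamma x * π ^ ((b : ℝ) / 2)) := by
        unfold unitBallVolume
        rw [hπ]
        push_cast
        field_simp
        simp only [x, y]
        ring_nf
    _ ≤ Gamma x * y ^ ((b : ℝ) / 2) / (Gamma x * π ^ ((b : ℝ) / 2)) := by gcongr
    _ = (y / π) ^ ((b : ℝ) / 2) := by
        rw [div_rpow hy.le pi_pos.le, mul_div_mul_left _ _ hΓx.ne']

lemma unitBallVolume_div_mul_rpow_le_one (a b : ℕ) {r : ℝ} (hr : 0 < r)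
    (hr2 : (a + b : ℝ) ≤ r ^ 2) :
    unitBallVolume a / unitBallVolume (a + b) * r ^ (-(b : ℝ)) ≤ 1 := by
  rcases Nat.eq_zero_or_pos b with rfl | hb
  · simp [div_self (unitBallVolume_pos a).ne']
  have hr_rpow : r ^ (-(b : ℝ)) = ((r ^ 2)⁻¹) ^ ((b : ℝ) / 2) := by
    rw [inv_rpow (by positivity), ← rpow_neg (by positivity), ← rpow_natCast, ← rpow_mul hr.le]
    ring_nf
  have hbase : ((a + b : ℝ) / 2 + 1) / π * (r ^ 2)⁻¹ ≤ 1 := by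
    have hb1 : (1 : ℝ) ≤ b := by exact_mod_cast hb
    have hnum : (a + b : ℝ) / 2 + 1 ≤ π * r ^ 2 := by nlinarith [pi_gt_three]
    rw [← div_eq_mul_inv, div_div]
    exact div_le_one_of_le₀ hnum (by positivity)
  calc unitBallVolume a / unitBallVolume (a + b) * r ^ (-(b : ℝ))
      ≤ (((a + b : ℝ) / 2 + 1) / π) ^ ((b : ℝ) / 2) * ((r ^ 2)⁻¹) ^ ((b : ℝ) / 2) := by
        rw [hr_rpow]
        gcongr
        exact unitBallVolume_div_le a b
    _ = (((a + b : ℝ) / 2 + 1) / π * (r ^ 2)⁻¹) ^ ((b : ℝ) / 2) := by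
        rw [mul_rpow (by positivity) (by positivity)]
    _ ≤ 1 := rpow_le_one (by positivity) hbase (by positivity)

theorem volume_ratio_bound :
    ∃ C : ℝ, 0 < C ∧ ∀ (n : ℕ) (S₀ S : Finset (Fin n)) (r : ℝ), 0 < r →
      (S₀.card : ℝ) ≤ r ^ 2 →
      unitBallVolume (S ∩ S₀).card / unitBallVolume S₀.card
          * r ^ (-((S₀ \ S).card : ℝ)) ≤
        Real.exp (C * S₀.card) := by
  refine ⟨1, one_pos, fun n S₀ S r hr hr2 => ?_⟩
  have hcard : S₀.card = (S ∩ S₀).card + (S₀ \ S).card := by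
    rw [inter_comm, card_inter_add_card_sdiff]
  rw [hcard] at hr2 ⊢
  push_cast at hr2
  exact (unitBallVolume_div_mul_rpow_le_one _ _ hr hr2).trans (one_le_exp (by positivity))
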